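/- arXiv:math/9212203 — 9 statements merged into one kernel-verified Lean document; each statement's English description precedes it below -/
import Mathlib

section
/- Let E be a real Banach space, x, y ∈ E, and α ∈ ℝ with x + α y ≠ 0. Then the function φ(t) = ‖x + t y‖ is differentiable at the point α if and only if x₁*(y) = x₂*(y) for every pair of support functionals x₁*, x₂* ∈ S(x + α y). -/
/-!
Shifting `t` by `α`, it suffices to study `φ t = ‖u + t • v‖` at `0`, where `u = x + α • y ≠ 0`.
A support functional `f` at `u` is a subgradient of `φ` at `0`, since
`‖u + t • v‖ ≥ f (u + t • v) = ‖u‖ + t * f v`; so if `φ` is differentiable at `0` then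
`f v = φ' 0` for every such `f`. Conversely, the one-sided directional derivative `p` of the norm
at `u` is sublinear and dominated by the norm, so Hahn–Banach gives a linear `f ≤ p` with
`f v = p v`; then `f (-u) ≤ p (-u) ≤ -‖u‖` makes `f` a support functional. Applied to `v` and to
`-v` this produces support functionals taking the values `p v` and `-p (-v)` at `v`, which are the
right and left derivatives of `φ` at `0`; when all support functionals agree, these coincide.
-/

/-- The set of support functionals at `x`: norm-one continuous functionals attaining `‖x‖` at `x`. -/
def suppSet {E : Type*} [NormedAddCommGroup E] [NormedSpace ℝ E] (x : E) :
    Set (E →L[ℝ] ℝ) :=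
  {f | ‖f‖ = 1 ∧ f x = ‖x‖}

open Set Filter Topology

theorem LinearMap.exists_le_sublinear_apply_eq {E : Type*} [AddCommGroup E] [Module ℝ E]
    (N : E → ℝ) (N_hom : ∀ c : ℝ, 0 < c → ∀ x, N (c • x) = c * N x)
    (N_add : ∀ x y, N (x + y) ≤ N x + N y) (w : E) :
    ∃ g : E →ₗ[ℝ] ℝ, (∀ x, g x ≤ N x) ∧ g w = N w := by
  have N_zero : N 0 = 0 := by
    have := N_hom 2 two_pos 0
    rw [smul_zero] at this
    linarith
  have N_neg : -N w ≤ N (-w) := by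
    have := N_add w (-w)
    rw [add_neg_cancel, N_zero] at this
    linarith
  let f : E →ₗ.[ℝ] ℝ := LinearPMap.mkSpanSingleton' w (N w) fun c hc => by
    rcases smul_eq_zero.mp hc with rfl | rfl
    · exact zero_smul ℝ _
    · rw [N_zero, smul_zero]
  have hf : ∀ x : f.domain, f x ≤ N x := by
    rintro ⟨_, hx⟩
    obtain ⟨c, rfl⟩ := Submodule.mem_span_singleton.mp hx
    rw [LinearPMap.mkSpanSingleton'_apply, smul_eq_mul]
    change c * N w ≤ N (c • w)
    rcases lt_trichotomy c 0 with hc | rfl | hc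
    · rw [show c • w = (-c) • -w by rw [neg_smul_neg], N_hom _ (neg_pos.mpr hc)]
      nlinarith
    · simp [N_zero]
    · rw [N_hom c hc]
  obtain ⟨g, hgf, hgN⟩ := exists_extension_of_le_sublinear f N N_hom N_add hf
  exact ⟨g, hgN, (hgf ⟨w, Submodule.mem_span_singleton_self w⟩).trans
    (LinearPMap.mkSpanSingleton'_apply_self _ _ _ _)⟩

section NormDirDeriv

variable {E : Type*} [NormedAddCommGroup E] [NormedSpace ℝ E]

theorem convexOn_norm_add_smul (u v : E) : ConvexOn ℝ univ fun t : ℝ => ‖u + t • v‖ := by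
  have := (convexOn_norm (E := E) convex_univ).comp_affineMap
    ((AffineMap.lineMap u (u + v) : ℝ →ᵃ[ℝ] E))
  simpa [Function.comp_def, AffineMap.lineMap_apply, add_comm] using this

noncomputable def normDirDeriv (u v : E) : ℝ :=
  derivWithin (fun t : ℝ => ‖u + t • v‖) (Ioi 0) 0

theorem hasDerivWithinAt_normDirDeriv (u v : E) :
    HasDerivWithinAt (fun t : ℝ => ‖u + t • v‖) (normDirDeriv u v) (Ioi 0) 0 :=
  (convexOn_norm_add_smul u v).hasDerivWithinAt_rightDeriv_of_mem_interior (by simp)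

theorem normDirDeriv_le_slope (u v : E) {t : ℝ} (ht : 0 < t) :
    normDirDeriv u v ≤ (‖u + t • v‖ - ‖u‖) / t := by
  simpa [normDirDeriv, slope_def_field] using
    (convexOn_norm_add_smul u v).rightDeriv_le_slope_of_mem_interior (x := 0) (by simp)
      (mem_univ t) ht

theorem normDirDeriv_le_norm (u v : E) : normDirDeriv u v ≤ ‖v‖ := by
  have := normDirDeriv_le_slope u v one_pos
  rw [one_smul, div_one] at this
  linarith [norm_add_le u v]

theorem normDirDeriv_neg_self_le (u : E) : normDirDeriv u (-u) ≤ -‖u‖ := by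
  simpa using normDirDeriv_le_slope u (-u) one_pos

theorem normDirDeriv_smul (u v : E) {c : ℝ} (hc : 0 < c) :
    normDirDeriv u (c • v) = c * normDirDeriv u v := by
  have hscale : HasDerivWithinAt (· * c) c (Ioi 0) 0 := by
    simpa using (hasDerivWithinAt_id (0 : ℝ) (Ioi 0)).mul_const c
  have := (hasDerivWithinAt_normDirDeriv u v).comp_of_eq 0 hscale
    (fun t ht => mul_pos ht hc) (zero_mul c).symm
  simp only [Function.comp_def, mul_smul] at this
  rw [mul_comm]
  exact this.derivWithin (uniqueDiffWithinAt_Ioi 0)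

theorem tendsto_slope_normDirDeriv (u v : E) :
    Tendsto (fun t : ℝ => (‖u + t • v‖ - ‖u‖) / t) (𝓝[>] 0) (𝓝 (normDirDeriv u v)) := by
  refine ((hasDerivWithinAt_iff_tendsto_slope' (lt_irrefl 0)).mp
    (hasDerivWithinAt_normDirDeriv u v)).congr fun t => ?_
  simp [slope_def_field]

theorem norm_add_smul_add_le (u v w : E) (t : ℝ) :
    ‖u + t • (v + w)‖ ≤ (‖u + t • (2 : ℝ) • v‖ + ‖u + t • (2 : ℝ) • w‖) / 2 := by
  calc ‖u + t • (v + w)‖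
        = ‖(2⁻¹ : ℝ) • (u + t • (2 : ℝ) • v) + (2⁻¹ : ℝ) • (u + t • (2 : ℝ) • w)‖ := by
        congr 1; module
    _ ≤ _ := (norm_add_le _ _).trans_eq <| by
      rw [norm_smul, norm_smul, Real.norm_of_nonneg (by norm_num)]; ring

theorem normDirDeriv_add_le (u v w : E) :
    normDirDeriv u (v + w) ≤ normDirDeriv u v + normDirDeriv u w := by
  have hlim := ((tendsto_slope_normDirDeriv u ((2 : ℝ) • v)).add
    (tendsto_slope_normDirDeriv u ((2 : ℝ) • w))).div_const 2
  rw [normDirDeriv_smul u v two_pos, normDirDeriv_smul u w two_pos, ← mul_add,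
    mul_div_cancel_left₀ _ two_ne_zero] at hlim
  refine ge_of_tendsto hlim (eventually_nhdsWithin_of_forall fun t (ht : 0 < t) => ?_)
  calc normDirDeriv u (v + w) ≤ (‖u + t • (v + w)‖ - ‖u‖) / t := normDirDeriv_le_slope _ _ ht
    _ ≤ _ := by
      rw [← add_div, div_div, mul_comm, ← div_div]
      gcongr
      linarith [norm_add_smul_add_le u v w t]

theorem apply_le_norm_of_mem_suppSet {u : E} {f : E →L[ℝ] ℝ} (hf : f ∈ suppSet u) (z : E) :
    f z ≤ ‖z‖ :=
  calc f z ≤ ‖f z‖ := le_abs_self _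
    _ ≤ ‖f‖ * ‖z‖ := f.le_opNorm z
    _ = ‖z‖ := by rw [hf.1, one_mul]

theorem mem_suppSet_of_opNorm_le_one {u : E} (hu : u ≠ 0) {f : E →L[ℝ] ℝ} (hf : ‖f‖ ≤ 1)
    (hfu : f u = ‖u‖) : f ∈ suppSet u := by
  refine ⟨le_antisymm hf (le_of_mul_le_mul_right ?_ (norm_pos_iff.mpr hu)), hfu⟩
  calc 1 * ‖u‖ = f u := by rw [one_mul, hfu]
    _ ≤ ‖f u‖ := le_abs_self _
    _ ≤ ‖f‖ * ‖u‖ := f.le_opNorm u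

theorem exists_mem_suppSet_apply_eq_normDirDeriv {u : E} (hu : u ≠ 0) (w : E) :
    ∃ f ∈ suppSet u, f w = normDirDeriv u w := by
  obtain ⟨g, hgN, hgw⟩ := LinearMap.exists_le_sublinear_apply_eq (normDirDeriv u)
    (fun _ hc v => normDirDeriv_smul u v hc) (normDirDeriv_add_le u) w
  have hg_le (z : E) : g z ≤ ‖z‖ := (hgN z).trans (normDirDeriv_le_norm u z)
  have hg_bound (z : E) : ‖g z‖ ≤ 1 * ‖z‖ := by
    rw [one_mul, Real.norm_eq_abs, abs_le]
    constructor
    · linarith [hg_le (-z), map_neg g z, norm_neg z]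
    · exact hg_le z
  have hgu : g u = ‖u‖ := by
    refine le_antisymm (hg_le u) ?_
    linarith [(hgN (-u)).trans (normDirDeriv_neg_self_le u), map_neg g u]
  exact ⟨g.mkContinuous 1 hg_bound,
    mem_suppSet_of_opNorm_le_one hu (g.mkContinuous_norm_le zero_le_one _) hgu, hgw⟩

theorem apply_eq_of_hasDerivAt_norm_add_smul {u v : E} {f : E →L[ℝ] ℝ} (hf : f ∈ suppSet u)
    {d : ℝ} (hd : HasDerivAt (fun t : ℝ => ‖u + t • v‖) d 0) : f v = d := by
  have hmin : IsLocalMin (fun t : ℝ => ‖u + t • v‖ - f (u + t • v)) 0 :=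
    Eventually.of_forall fun t => by
      simpa [hf.2] using apply_le_norm_of_mem_suppSet hf (u + t • v)
  have hline : HasDerivAt (fun t : ℝ => f (u + t • v)) (f v) 0 := by
    simpa [Function.comp_def] using
      f.hasFDerivAt.comp_hasDerivAt 0 (((hasDerivAt_id (0 : ℝ)).smul_const v).const_add u)
  linarith [hmin.hasDerivAt_eq_zero (hd.sub hline)]

theorem hasDerivAt_norm_add_smul_of_normDirDeriv_neg {u v : E}
    (h : normDirDeriv u (-v) = -normDirDeriv u v) :
    HasDerivAt (fun t : ℝ => ‖u + t • v‖) (normDirDeriv u v) 0 := by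
  have hleft := (hasDerivWithinAt_normDirDeriv u (-v)).comp_of_eq 0
    (hasDerivWithinAt_neg 0 (Iio 0)) (fun t ht => neg_pos.mpr ht) neg_zero.symm
  simp only [Function.comp_def, neg_smul_neg, h, mul_neg_one, neg_neg] at hleft
  have := hleft.Iic_of_Iio.union (hasDerivWithinAt_normDirDeriv u v).Ici_of_Ioi
  rwa [Iic_union_Ici, hasDerivWithinAt_univ] at this

theorem differentiableAt_norm_add_smul_iff {u : E} (hu : u ≠ 0) (v : E) :
    DifferentiableAt ℝ (fun t : ℝ => ‖u + t • v‖) 0 ↔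
      ∀ f ∈ suppSet u, ∀ g ∈ suppSet u, f v = g v := by
  refine ⟨fun hd f hf g hg => ?_, fun h => ?_⟩
  · exact (apply_eq_of_hasDerivAt_norm_add_smul hf hd.hasDerivAt).trans
      (apply_eq_of_hasDerivAt_norm_add_smul hg hd.hasDerivAt).symm
  · obtain ⟨f, hf, hfv⟩ := exists_mem_suppSet_apply_eq_normDirDeriv hu v
    obtain ⟨g, hg, hgv⟩ := exists_mem_suppSet_apply_eq_normDirDeriv hu (-v)
    refine (hasDerivAt_norm_add_smul_of_normDirDeriv_neg ?_).differentiableAt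
    rw [← hfv, ← hgv, map_neg, h g hg f hf]

end NormDirDeriv

theorem norm_differentiableAt_iff_support_functionals_agree_general
    {E : Type*} [NormedAddCommGroup E] [NormedSpace ℝ E]
    (x y : E) (α : ℝ) (h : x + α • y ≠ 0) :
    DifferentiableAt ℝ (fun t : ℝ => ‖x + t • y‖) α ↔
      ∀ f ∈ suppSet (x + α • y), ∀ g ∈ suppSet (x + α • y), f y = g y := by
  rw [differentiableAt_iff_comp_add_const (b := α), sub_self,
    ← differentiableAt_norm_add_smul_iff h]
  congr! 3 with t
  module

theorem norm_differentiableAt_iff_support_functionals_agree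
    {E : Type*} [NormedAddCommGroup E] [NormedSpace ℝ E] [CompleteSpace E]
    (x y : E) (α : ℝ) (h : x + α • y ≠ 0) :
    DifferentiableAt ℝ (fun t : ℝ => ‖x + t • y‖) α ↔
      ∀ f ∈ suppSet (x + α • y), ∀ g ∈ suppSet (x + α • y), f y = g y :=
  norm_differentiableAt_iff_support_functionals_agree_general x y α h
end

section
/- Let E be a real Banach space, x, y ∈ E with x ≠ 0. Then x is James-orthogonal to y if and only if inf_{x* ∈ S(x)} x*(y) ≤ 0 ≤ sup_{x* ∈ S(x)} x*(y). -/
/-- James orthogonality: `x ⊥ y` iff `‖x + α • y‖ ≥ ‖x‖` for every real `α`. -/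
def JamesOrth {E : Type*} [NormedAddCommGroup E] [NormedSpace ℝ E] (x y : E) : Prop :=
  ∀ α : ℝ, ‖x‖ ≤ ‖x + α • y‖

/-!
`x ⊥ y` says exactly that the class of `x` in `E ⧸ ℝ ∙ y` has norm `‖x‖`; a norming functional of
that class (Hahn–Banach) is then a support functional at `x` vanishing at `y`. Conversely, every
`f ∈ S(x)` gives `‖x + α • y‖ ≥ f (x + α • y) = ‖x‖ + α f(y)`, and letting `f(y)` approach the
supremum (for `α > 0`) or the infimum (for `α < 0`) of the values `f(y)` gives `‖x + α • y‖ ≥ ‖x‖`.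
-/

section

variable {E : Type*} [NormedAddCommGroup E] [NormedSpace ℝ E] {x : E} {f : E →L[ℝ] ℝ}

theorem mem_suppSet_of_norm_le_one (hx : x ≠ 0) (hf : ‖f‖ ≤ 1) (hfx : f x = ‖x‖) :
    f ∈ suppSet x := by
  refine ⟨le_antisymm hf ?_, hfx⟩
  have hle : ‖x‖ ≤ ‖f‖ * ‖x‖ := by
    simpa [hfx] using f.le_opNorm x
  exact one_le_of_le_mul_right₀ (norm_pos_iff.mpr hx) (by simpa using hle)

theorem suppSet_nonempty (hx : x ≠ 0) : (suppSet x).Nonempty :=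
  (exists_dual_vector ℝ x (norm_ne_zero_iff.mpr hx)).imp fun _ hf => ⟨hf.1, by simpa using hf.2⟩

theorem abs_apply_le_of_mem_suppSet (hf : f ∈ suppSet x) (y : E) : |f y| ≤ ‖y‖ := by
  simpa [hf.1] using f.le_opNorm y

theorem image_suppSet_subset_Icc (x y : E) :
    (fun f : E →L[ℝ] ℝ => f y) '' suppSet x ⊆ Set.Icc (-‖y‖) ‖y‖ := by
  rintro _ ⟨f, hf, rfl⟩
  exact abs_le.mp (abs_apply_le_of_mem_suppSet hf y)

theorem norm_add_mul_apply_le_of_mem_suppSet (hf : f ∈ suppSet x) (y : E) (α : ℝ) :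
    ‖x‖ + α * f y ≤ ‖x + α • y‖ :=
  calc ‖x‖ + α * f y = f (x + α • y) := by simp [hf.2]
    _ ≤ |f (x + α • y)| := le_abs_self _
    _ ≤ ‖x + α • y‖ := abs_apply_le_of_mem_suppSet hf _

theorem JamesOrth.norm_mk_span_singleton {y : E} (h : JamesOrth x y) :
    ‖(Submodule.Quotient.mk x : E ⧸ ℝ ∙ y)‖ = ‖x‖ := by
  refine le_antisymm (Submodule.Quotient.norm_mk_le _ x) ?_
  refine QuotientAddGroup.le_norm_iff.mpr fun m hm => ?_
  obtain ⟨α, hα⟩ := Submodule.mem_span_singleton.mp ((Submodule.Quotient.eq _).mp hm)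
  rw [show m = x + α • y by rw [hα]; abel]
  exact h α

theorem JamesOrth.exists_mem_suppSet_apply_eq_zero {y : E} (hx : x ≠ 0) (h : JamesOrth x y) :
    ∃ f ∈ suppSet x, f y = 0 := by
  obtain ⟨g, hg, hgx⟩ := exists_dual_vector ℝ (Submodule.Quotient.mk x : E ⧸ ℝ ∙ y)
    (by rw [h.norm_mk_span_singleton]; exact norm_ne_zero_iff.mpr hx)
  have hnorm : ‖g.comp (ℝ ∙ y).mkQL‖ ≤ 1 := by
    refine ContinuousLinearMap.opNorm_le_bound _ zero_le_one fun z => ?_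
    calc ‖g (Submodule.Quotient.mk z)‖ ≤ ‖g‖ * ‖(Submodule.Quotient.mk z : E ⧸ ℝ ∙ y)‖ :=
          g.le_opNorm _
      _ ≤ 1 * ‖z‖ := by rw [hg]; gcongr; exact Submodule.Quotient.norm_mk_le _ z
  refine ⟨_, mem_suppSet_of_norm_le_one hx hnorm ?_, ?_⟩
  · simpa [h.norm_mk_span_singleton] using hgx
  · simp [(Submodule.Quotient.mk_eq_zero _).mpr (Submodule.mem_span_singleton_self y)]

theorem jamesOrth_of_sInf_nonpos_of_nonneg_sSup {y : E} (hx : x ≠ 0)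
    (hinf : sInf ((fun f : E →L[ℝ] ℝ => f y) '' suppSet x) ≤ 0)
    (hsup : 0 ≤ sSup ((fun f : E →L[ℝ] ℝ => f y) '' suppSet x)) : JamesOrth x y := by
  intro α
  set T := (fun f : E →L[ℝ] ℝ => f y) '' suppSet x
  have hT : T.Nonempty := (suppSet_nonempty hx).image _
  have hbound : ∀ t ∈ T, ‖x‖ + α * t ≤ ‖x + α • y‖ := by
    rintro _ ⟨f, hf, rfl⟩
    exact norm_add_mul_apply_le_of_mem_suppSet hf y α
  rcases lt_trichotomy α 0 with hα | rfl | hα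
  · have : (‖x + α • y‖ - ‖x‖) / α ≤ sInf T :=
      le_csInf hT fun t ht => (div_le_iff_of_neg hα).mpr (by linarith [hbound t ht])
    linarith [(div_le_iff_of_neg hα).mp (this.trans hinf)]
  · simp
  · have : sSup T ≤ (‖x + α • y‖ - ‖x‖) / α :=
      csSup_le hT fun t ht => (le_div_iff₀' hα).mpr (by linarith [hbound t ht])
    linarith [(le_div_iff₀ hα).mp (hsup.trans this)]

end

theorem jamesOrth_iff_inf_le_zero_le_sup_general
    {E : Type*} [NormedAddCommGroup E] [NormedSpace ℝ E]
    (x y : E) (hx : x ≠ 0) :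
    JamesOrth x y ↔
      sInf ((fun f : E →L[ℝ] ℝ => f y) '' suppSet x) ≤ 0 ∧
        0 ≤ sSup ((fun f : E →L[ℝ] ℝ => f y) '' suppSet x) := by
  refine ⟨fun h => ?_, fun h => jamesOrth_of_sInf_nonpos_of_nonneg_sSup hx h.1 h.2⟩
  obtain ⟨f, hf, hfy⟩ := h.exists_mem_suppSet_apply_eq_zero hx
  have hmem : (0 : ℝ) ∈ (fun f : E →L[ℝ] ℝ => f y) '' suppSet x := ⟨f, hf, hfy⟩
  have hbdd := image_suppSet_subset_Icc x y
  exact ⟨csInf_le (bddBelow_Icc.mono hbdd) hmem, le_csSup (bddAbove_Icc.mono hbdd) hmem⟩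

theorem jamesOrth_iff_inf_le_zero_le_sup
    {E : Type*} [NormedAddCommGroup E] [NormedSpace ℝ E] [CompleteSpace E]
    (x y : E) (hx : x ≠ 0) :
    JamesOrth x y ↔
      sInf ((fun f : E →L[ℝ] ℝ => f y) '' suppSet x) ≤ 0 ∧
        0 ≤ sSup ((fun f : E →L[ℝ] ℝ => f y) '' suppSet x) :=
  jamesOrth_iff_inf_le_zero_le_sup_general x y hx
end

section
/- (Lemma 1(i)) Let E be a real Banach space, x, y ∈ E linearly independent, α ∈ D(x,y), and a, b ∈ ℝ. Then the number x*(a x + b y) does not depend on the choice of x* ∈ S(x + α y): for all x₁*, x₂* ∈ S(x + α y), x₁*(a x + b y) = x₂*(a x + b y). -/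
namespace suppSet

variable {E : Type*} [NormedAddCommGroup E] [NormedSpace ℝ E] {f : E →L[ℝ] ℝ}

theorem apply_le_norm {z : E} (hf : f ∈ suppSet z) (v : E) : f v ≤ ‖v‖ :=
  calc f v ≤ ‖f‖ * ‖v‖ := (le_abs_self _).trans (f.le_opNorm v)
    _ = ‖v‖ := by rw [hf.1, one_mul]

theorem apply_eq_of_hasDerivAt {x y : E} {α φ' : ℝ} (hf : f ∈ suppSet (x + α • y))
    (hφ : HasDerivAt (fun t : ℝ => ‖x + t • y‖) φ' α) : f y = φ' := by
  have hline : HasDerivAt (fun t : ℝ => f (x + t • y)) (f y) α := by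
    simpa only [map_add, map_smul, smul_eq_mul] using (hasDerivAt_mul_const (f y)).const_add (f x)
  have hmin : IsLocalMin (fun t : ℝ => ‖x + t • y‖ - f (x + t • y)) α :=
    Filter.Eventually.of_forall fun t => by
      simpa only [hf.2, sub_self, sub_nonneg] using apply_le_norm hf (x + t • y)
  linarith [hmin.hasDerivAt_eq_zero (hφ.sub hline)]

theorem apply_smul_add_smul {x y : E} {α : ℝ} (hf : f ∈ suppSet (x + α • y)) (a b : ℝ) :
    f (a • x + b • y) = a * ‖x + α • y‖ + (b - a * α) * f y := by
  have hdecomp : a • x + b • y = a • (x + α • y) + (b - a * α) • y := by module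
  rw [hdecomp, map_add, map_smul, map_smul, hf.2, smul_eq_mul, smul_eq_mul]

end suppSet

theorem support_functional_value_independent_general
    {E : Type*} [NormedAddCommGroup E] [NormedSpace ℝ E]
    (x y : E) (α : ℝ)
    (hα : DifferentiableAt ℝ (fun t : ℝ => ‖x + t • y‖) α) (a b : ℝ) :
    ∀ f ∈ suppSet (x + α • y), ∀ g ∈ suppSet (x + α • y),
      f (a • x + b • y) = g (a • x + b • y) := by
  intro f hf g hg
  rw [suppSet.apply_smul_add_smul hf, suppSet.apply_smul_add_smul hg,
    suppSet.apply_eq_of_hasDerivAt hf hα.hasDerivAt, suppSet.apply_eq_of_hasDerivAt hg hα.hasDerivAt]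

theorem support_functional_value_independent
    {E : Type*} [NormedAddCommGroup E] [NormedSpace ℝ E] [CompleteSpace E]
    (x y : E) (hxy : LinearIndependent ℝ ![x, y]) (α : ℝ)
    (hα : DifferentiableAt ℝ (fun t : ℝ => ‖x + t • y‖) α) (a b : ℝ) :
    ∀ f ∈ suppSet (x + α • y), ∀ g ∈ suppSet (x + α • y),
      f (a • x + b • y) = g (a • x + b • y) :=
  support_functional_value_independent_general x y α hα a b
end

section
/- (Lemma 3) Let E be a real Banach space, x, y ∈ E linearly independent, and α ∈ D(x,y). Then either x + α y is James-orthogonal to y, or there exists a unique real number β such that x + α y is James-orthogonal to x − β y. -/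
/-!
Let `φ t = ‖x + t • y‖`, `c = φ' α` and `z = x + α • y`. A functional `f` of norm at most
one with `f z = ‖z‖` gives a supporting line `t ↦ f (x + t • y)` of the convex function `φ`
at `α`, so `f y = c`. If `c = 0` then `f` vanishes on `y`, and otherwise on `x - β • y` for
`β = ‖z‖ / c - α`; either way `z` is orthogonal to that vector `w`, as
`‖z‖ = f (z + a • w) ≤ ‖z + a • w‖`. For uniqueness, near `t = 0` we have
`‖z + t • (x - β • y)‖ = (1 + t) φ ((α - t β) / (1 + t))`, and orthogonality makes `t = 0` a
minimum, so the derivative `‖z‖ - (α + β) c` there vanishes.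
-/

open Filter

section

variable {E : Type*} [NormedAddCommGroup E] [NormedSpace ℝ E]

theorem StrongDual.apply_le_norm {f : StrongDual ℝ E} (hf : ‖f‖ ≤ 1) (w : E) : f w ≤ ‖w‖ :=
  (le_abs_self _).trans ((f.le_of_opNorm_le hf w).trans_eq (one_mul _))

theorem JamesOrth.of_dual_apply_eq_zero {f : StrongDual ℝ E} (hf : ‖f‖ ≤ 1) {z w : E}
    (hz : f z = ‖z‖) (hw : f w = 0) : JamesOrth z w := fun a =>
  calc ‖z‖ = f (z + a • w) := by simp [hz, hw]
    _ ≤ ‖z + a • w‖ := StrongDual.apply_le_norm hf _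

theorem JamesOrth.hasDerivAt_eq_zero {z w : E} (h : JamesOrth z w) {d : ℝ}
    (hd : HasDerivAt (fun t : ℝ => ‖z + t • w‖) d 0) : d = 0 :=
  IsLocalMin.hasDerivAt_eq_zero (Eventually.of_forall fun t => by simpa using h t) hd

theorem dual_apply_eq_of_hasDerivAt_norm_add_smul {f : StrongDual ℝ E} (hf : ‖f‖ ≤ 1)
    {x y : E} {α c : ℝ} (hc : HasDerivAt (fun t : ℝ => ‖x + t • y‖) c α)
    (hfα : f (x + α • y) = ‖x + α • y‖) : f y = c := by
  have hgap : HasDerivAt (fun t : ℝ => ‖x + t • y‖ - f (x + t • y)) (c - f y) α := by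
    have hline : HasDerivAt (fun t : ℝ => x + t • y) y α := by
      simpa using ((hasDerivAt_id α).smul_const y).const_add x
    exact hc.sub (f.hasFDerivAt.comp_hasDerivAt α hline)
  have hmin : IsLocalMin (fun t : ℝ => ‖x + t • y‖ - f (x + t • y)) α :=
    Eventually.of_forall fun t => by
      simpa only [hfα, sub_self, sub_nonneg] using StrongDual.apply_le_norm hf (x + t • y)
  linarith [hmin.hasDerivAt_eq_zero hgap]

theorem hasDerivAt_norm_add_smul_add_smul_sub {x y : E} {α c : ℝ} (β : ℝ)
    (hc : HasDerivAt (fun t : ℝ => ‖x + t • y‖) c α) :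
    HasDerivAt (fun t : ℝ => ‖x + α • y + t • (x - β • y)‖) (‖x + α • y‖ - (α + β) * c) 0 := by
  have hρ : HasDerivAt (fun t : ℝ => (α - t * β) / (1 + t)) (-(α + β)) 0 :=
    (((hasDerivAt_mul_const β).const_sub α).fun_div ((hasDerivAt_id' 0).const_add 1)
      (by norm_num)).congr_deriv (by ring)
  have hφρ : HasDerivAt (fun t : ℝ => ‖x + ((α - t * β) / (1 + t)) • y‖) (c * -(α + β)) 0 :=
    HasDerivAt.comp (h₂ := fun s : ℝ => ‖x + s • y‖) 0 (by simpa using hc) hρ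
  have hperspective : (fun t : ℝ => (1 + t) * ‖x + ((α - t * β) / (1 + t)) • y‖)
      =ᶠ[nhds 0] fun t : ℝ => ‖x + α • y + t • (x - β • y)‖ := by
    filter_upwards [Ioi_mem_nhds (by norm_num : (-1 : ℝ) < 0)] with t (ht : -1 < t)
    have hpos : 0 < 1 + t := by linarith
    rw [← abs_of_pos hpos, ← Real.norm_eq_abs, ← norm_smul, smul_add, smul_smul,
      Real.norm_eq_abs, abs_of_pos hpos, mul_div_cancel₀ _ hpos.ne']
    congr 1
    module
  refine HasDerivAt.congr_of_eventuallyEq ?_ hperspective.symm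
  exact (((hasDerivAt_id' 0).const_add 1).mul hφρ).congr_deriv (by simp; ring)

end

theorem orth_to_y_or_unique_beta_general
    {E : Type*} [NormedAddCommGroup E] [NormedSpace ℝ E]
    (x y : E) (α : ℝ)
    (hα : DifferentiableAt ℝ (fun t : ℝ => ‖x + t • y‖) α) :
    JamesOrth (x + α • y) y ∨ ∃! β : ℝ, JamesOrth (x + α • y) (x - β • y) := by
  obtain ⟨c, hc⟩ : ∃ c, HasDerivAt (fun t : ℝ => ‖x + t • y‖) c α := ⟨_, hα.hasDerivAt⟩
  obtain ⟨f, hf, hfz⟩ : ∃ f : StrongDual ℝ E, ‖f‖ ≤ 1 ∧ f (x + α • y) = ‖x + α • y‖ :=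
    exists_dual_vector'' ℝ _
  have hfy : f y = c := dual_apply_eq_of_hasDerivAt_norm_add_smul hf hc hfz
  by_cases hc0 : c = 0
  · exact Or.inl (.of_dual_apply_eq_zero hf hfz (hfy.trans hc0))
  refine Or.inr ⟨‖x + α • y‖ / c - α, .of_dual_apply_eq_zero hf hfz ?_, fun β hβ => ?_⟩
  · have hfx : f x = ‖x + α • y‖ - α * c := by
      rw [← hfz, map_add, map_smul, hfy, smul_eq_mul]
      ring
    simp only [map_sub, map_smul, smul_eq_mul, hfx, hfy]
    field_simp
    ring
  · have hcrit := hβ.hasDerivAt_eq_zero (hasDerivAt_norm_add_smul_add_smul_sub β hc)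
    field_simp
    linarith

theorem orth_to_y_or_unique_beta
    {E : Type*} [NormedAddCommGroup E] [NormedSpace ℝ E] [CompleteSpace E]
    (x y : E) (hxy : LinearIndependent ℝ ![x, y]) (α : ℝ)
    (hα : DifferentiableAt ℝ (fun t : ℝ => ‖x + t • y‖) α) :
    JamesOrth (x + α • y) y ∨ ∃! β : ℝ, JamesOrth (x + α • y) (x - β • y) :=
  orth_to_y_or_unique_beta_general x y α hα
end

section
/- Let E be a real Banach space, x, y ∈ E linearly independent, and let [m, M] be the nonempty closed bounded interval {α ∈ ℝ : x + α y ⊥ y}. Suppose α > M, the function φ(t) = ‖x + t y‖ is differentiable at α, and β is a real number such that x + α y ⊥ x − β y. Then α + β ≠ 0 and the derivative φ'(α) equals ‖x + α y‖ / (α + β). -/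
namespace JamesOrth

variable {E : Type*} [NormedAddCommGroup E] [NormedSpace ℝ E] {z w : E}

theorem eq_zero_of_self (h : JamesOrth z z) : z = 0 := by
  simpa using h (-1)

theorem mul_norm_le_norm_add_smul_sub (h : JamesOrth z w) {t : ℝ} (ht : 0 < 1 + t) :
    (1 + t) * ‖z‖ ≤ ‖z + t • (z - w)‖ := by
  have hrescale : z + t • (z - w) = (1 + t) • (z + (-t / (1 + t)) • w) := by
    match_scalars <;> field_simp
  rw [hrescale, norm_smul, Real.norm_of_nonneg ht.le]
  exact mul_le_mul_of_nonneg_left (h _) ht.le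

theorem eq_norm_of_hasDerivAt_norm_add_smul_sub (h : JamesOrth z w) {d : ℝ}
    (hd : HasDerivAt (fun t : ℝ => ‖z + t • (z - w)‖) d 0) : d = ‖z‖ := by
  have hmin : IsLocalMin (fun t : ℝ => ‖z + t • (z - w)‖ - (1 + t) * ‖z‖) 0 := by
    filter_upwards [lt_mem_nhds (show (-1 : ℝ) < 0 by norm_num)] with t ht
    simpa using h.mul_norm_le_norm_add_smul_sub (by linarith : 0 < 1 + t)
  have hline : HasDerivAt (fun t : ℝ => (1 + t) * ‖z‖) ‖z‖ 0 := by
    simpa using ((hasDerivAt_id (0 : ℝ)).const_add 1).mul_const ‖z‖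
  exact sub_eq_zero.1 (hmin.hasDerivAt_eq_zero (hd.sub hline))

end JamesOrth

theorem deriv_of_norm_eq_norm_div_alpha_add_beta_general
    {E : Type*} [NormedAddCommGroup E] [NormedSpace ℝ E]
    (x y : E) (hxy : LinearIndependent ℝ ![x, y])
    (α : ℝ)
    (hdiff : DifferentiableAt ℝ (fun t : ℝ => ‖x + t • y‖) α)
    (β : ℝ) (hβ : JamesOrth (x + α • y) (x - β • y)) :
    α + β ≠ 0 ∧ deriv (fun t : ℝ => ‖x + t • y‖) α = ‖x + α • y‖ / (α + β) := by
  have hsub : (x + α • y) - (x - β • y) = (α + β) • y := by module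
  have hz : x + α • y ≠ 0 := fun h => by
    simpa using LinearIndependent.pair_iff.1 hxy 1 α (by simpa using h)
  have hne : α + β ≠ 0 := by
    intro h
    have hw : x - β • y = x + α • y := by rw [eq_comm, ← sub_eq_zero, hsub, h, zero_smul]
    exact hz (hw ▸ hβ).eq_zero_of_self
  have hline : HasDerivAt (fun t : ℝ => α + t * (α + β)) (α + β) 0 := by
    simpa using ((hasDerivAt_id (0 : ℝ)).mul_const (α + β)).const_add α
  have hcomp := hdiff.hasDerivAt.comp_of_eq (x := 0) hline (by ring)
  have hφ : (fun t : ℝ => ‖x + t • y‖) ∘ (fun t : ℝ => α + t * (α + β))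
      = fun t : ℝ => ‖(x + α • y) + t • ((x + α • y) - (x - β • y))‖ := by
    ext t
    simp only [Function.comp_apply, hsub]
    congr 1
    module
  rw [hφ] at hcomp
  refine ⟨hne, ?_⟩
  rw [eq_div_iff hne]
  exact hβ.eq_norm_of_hasDerivAt_norm_add_smul_sub hcomp

theorem deriv_of_norm_eq_norm_div_alpha_add_beta
    {E : Type*} [NormedAddCommGroup E] [NormedSpace ℝ E] [CompleteSpace E]
    (x y : E) (hxy : LinearIndependent ℝ ![x, y]) (m M : ℝ) (hmM : m ≤ M)
    (hIcc : {α : ℝ | JamesOrth (x + α • y) y} = Set.Icc m M)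
    (α : ℝ) (hα : M < α)
    (hdiff : DifferentiableAt ℝ (fun t : ℝ => ‖x + t • y‖) α)
    (β : ℝ) (hβ : JamesOrth (x + α • y) (x - β • y)) :
    α + β ≠ 0 ∧ deriv (fun t : ℝ => ‖x + t • y‖) α = ‖x + α • y‖ / (α + β) :=
  deriv_of_norm_eq_norm_div_alpha_add_beta_general x y hxy α hdiff β hβ
end

section
/- (Lemma 4, formula (2)) Let E be a real Banach space, x, y ∈ E linearly independent, let [m, M] be the nonempty closed bounded interval {α ∈ ℝ : x + α y ⊥ y}, and let f : ℝ → ℝ be a function such that for almost every t > M (with respect to Lebesgue measure), x + t y is James-orthogonal to x − f(t) y. Then for every α > M, ‖x + α y‖ = ‖x + M y‖ · exp( ∫_M^α (t + f(t))⁻¹ dt ). -/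
/-!
Write `φ s = ‖x + s • y‖`. Since `x + M • y ⊥ y`, `φ` attains its minimum `φ M > 0` at `M`, and
`φ` is `‖y‖`-Lipschitz, so `log ∘ φ` is Lipschitz, hence absolutely continuous, and differentiable
almost everywhere. At a point `t > M` where `x + t • y ⊥ x - c • y`, every other point of the
line is a multiple of `x + t • y + β • (x - c • y)`, which yields the support-line inequality
`φ t * |s + c| ≤ φ s * |t + c|`. Comparing with `s = M` forces `t + c > 0`, and then the support
line pins the derivative: `φ' t = φ t / (t + c)`, i.e. `(log ∘ φ)' t = (t + c)⁻¹`. The formula is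
the fundamental theorem of calculus for `log ∘ φ` on `[M, α]`.
-/

open MeasureTheory

open Set Interval

theorem Real.lipschitzOnWith_log_Ici {c : ℝ} (hc : 0 < c) :
    LipschitzOnWith ‖c⁻¹‖₊ Real.log (Ici c) := by
  refine (convex_Ici c).lipschitzOnWith_of_nnnorm_hasDerivWithin_le
    (fun u hu => (Real.hasDerivAt_log (hc.trans_le hu).ne').hasDerivWithinAt) fun u hu => ?_
  rw [← NNReal.coe_le_coe, coe_nnnorm, coe_nnnorm, Real.norm_eq_abs, Real.norm_eq_abs,
    abs_inv, abs_inv, abs_of_pos hc, abs_of_pos (hc.trans_le hu)]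
  exact inv_anti₀ hc hu

theorem LipschitzWith.log_of_le {α : Type*} [PseudoEMetricSpace α] {g : α → ℝ} {K : NNReal}
    {c : ℝ} (hg : LipschitzWith K g) (hc : 0 < c) (hle : ∀ a, c ≤ g a) :
    LipschitzWith (‖c⁻¹‖₊ * K) fun a => Real.log (g a) :=
  lipschitzOnWith_univ.1 <|
    (Real.lipschitzOnWith_log_Ici hc).comp hg.lipschitzOnWith fun a _ => hle a

theorem AbsolutelyContinuousOnInterval.integral_eq_sub_of_ae_hasDerivAt {f f' : ℝ → ℝ}
    {a b : ℝ} (hf : AbsolutelyContinuousOnInterval f a b)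
    (hf' : ∀ᵐ t, t ∈ Ι a b → HasDerivAt f (f' t) t) :
    ∫ t in a..b, f' t = f b - f a := by
  rw [← hf.integral_deriv_eq_sub]
  refine intervalIntegral.integral_congr_ae ?_
  filter_upwards [hf'] with t ht hmem using (ht hmem).deriv.symm

theorem DifferentiableAt.hasDerivAt_of_affine_le {g : ℝ → ℝ} {t a : ℝ}
    (hg : DifferentiableAt ℝ g t) (hle : ∀ s, g t + a * (s - t) ≤ g s) :
    HasDerivAt g a t := by
  have hmin : IsLocalMin (fun s => g s - a * (s - t)) t :=
    Filter.Eventually.of_forall fun s => by simp only; linarith [hle s]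
  have hlin : HasDerivAt (fun s => a * (s - t)) a t := by
    simpa using ((hasDerivAt_id t).sub_const t).const_mul a
  exact sub_eq_zero.1 (hmin.hasDerivAt_eq_zero (hg.hasDerivAt.sub hlin)) ▸ hg.hasDerivAt

theorem LinearIndependent.add_smul_ne_zero {R M : Type*} [Ring R] [Nontrivial R]
    [AddCommGroup M] [Module R M] {x y : M} (h : LinearIndependent R ![x, y]) (a : R) :
    x + a • y ≠ 0 := fun h0 =>
  one_ne_zero (LinearIndependent.pair_iff.1 h 1 a (by rwa [one_smul])).1

section JamesOrth

variable {E : Type*} [NormedAddCommGroup E] [NormedSpace ℝ E]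

theorem lipschitzWith_norm_add_smul (x y : E) : LipschitzWith ‖y‖₊ fun s : ℝ => ‖x + s • y‖ := by
  refine LipschitzWith.of_dist_le_mul fun s t => ?_
  calc dist ‖x + s • y‖ ‖x + t • y‖ ≤ ‖(x + s • y) - (x + t • y)‖ := dist_norm_norm_le _ _
    _ = ‖y‖ * dist s t := by
      rw [add_sub_add_left_eq_sub, ← sub_smul, norm_smul, Real.dist_eq, Real.norm_eq_abs, mul_comm]

theorem JamesOrth.norm_le_norm_add_smul {x y : E} {a : ℝ} (h : JamesOrth (x + a • y) y)
    (s : ℝ) : ‖x + a • y‖ ≤ ‖x + s • y‖ := by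
  simpa [add_assoc, ← add_smul] using h (s - a)

theorem JamesOrth.norm_mul_abs_add_le {x y : E} {t c : ℝ} (h : JamesOrth (x + t • y) (x - c • y))
    (s : ℝ) : ‖x + t • y‖ * |s + c| ≤ ‖x + s • y‖ * |t + c| := by
  rcases eq_or_ne (s + c) 0 with hs | hs
  · rw [hs, abs_zero, mul_zero]
    positivity
  have hcomb : x + t • y + ((t - s) / (s + c)) • (x - c • y) =
      ((t + c) / (s + c)) • (x + s • y) := by
    match_scalars <;> field_simp <;> ring
  have := h ((t - s) / (s + c))
  rw [hcomb, norm_smul, Real.norm_eq_abs, abs_div, div_mul_eq_mul_div,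
    le_div_iff₀ (abs_pos.2 hs)] at this
  linarith

theorem JamesOrth.add_pos_of_norm_le {x y : E} {a t c : ℝ} (h : JamesOrth (x + t • y) (x - c • y))
    (hle : ‖x + a • y‖ ≤ ‖x + t • y‖) (hat : a < t) (hne : x + t • y ≠ 0) : 0 < t + c := by
  by_contra! hc
  have hsupp := h.norm_mul_abs_add_le a
  rw [abs_of_nonpos hc, abs_of_neg (by linarith)] at hsupp
  have : 0 < ‖x + t • y‖ * (t - a) := mul_pos (norm_pos_iff.2 hne) (sub_pos.2 hat)
  nlinarith

theorem JamesOrth.hasDerivAt_norm_add_smul {x y : E} {t c : ℝ}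
    (h : JamesOrth (x + t • y) (x - c • y)) (hc : 0 < t + c)
    (hd : DifferentiableAt ℝ (fun s : ℝ => ‖x + s • y‖) t) :
    HasDerivAt (fun s : ℝ => ‖x + s • y‖) (‖x + t • y‖ / (t + c)) t := by
  refine hd.hasDerivAt_of_affine_le fun s => ?_
  have hsupp := (mul_le_mul_of_nonneg_left (le_abs_self (s + c)) (norm_nonneg (x + t • y))).trans
    (h.norm_mul_abs_add_le s)
  rw [abs_of_pos hc] at hsupp
  calc ‖x + t • y‖ + ‖x + t • y‖ / (t + c) * (s - t) = ‖x + t • y‖ * (s + c) / (t + c) := by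
        field_simp; ring
    _ ≤ ‖x + s • y‖ := (div_le_iff₀ hc).2 hsupp

end JamesOrth

theorem norm_formula_right_of_M_general
    {E : Type*} [NormedAddCommGroup E] [NormedSpace ℝ E]
    (x y : E) (hxy : LinearIndependent ℝ ![x, y]) (m M : ℝ) (hmM : m ≤ M)
    (hIcc : {α : ℝ | JamesOrth (x + α • y) y} = Set.Icc m M)
    (f : ℝ → ℝ)
    (hf : ∀ᵐ t ∂(volume : Measure ℝ), M < t → JamesOrth (x + t • y) (x - f t • y)) :
    ∀ α : ℝ, M < α →
      ‖x + α • y‖ = ‖x + M • y‖ * Real.exp (∫ t in M..α, (t + f t)⁻¹) := by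
  intro α hα
  have hJM : JamesOrth (x + M • y) y := by
    change M ∈ {α : ℝ | JamesOrth (x + α • y) y}
    exact hIcc ▸ ⟨hmM, le_rfl⟩
  have hM0 : 0 < ‖x + M • y‖ := norm_pos_iff.2 (hxy.add_smul_ne_zero M)
  have hpos (s : ℝ) : 0 < ‖x + s • y‖ := hM0.trans_le (hJM.norm_le_norm_add_smul s)
  have hderiv : ∀ᵐ t, t ∈ Ι M α →
      HasDerivAt (fun s => Real.log ‖x + s • y‖) (t + f t)⁻¹ t := by
    filter_upwards [hf, (lipschitzWith_norm_add_smul x y).ae_differentiableAt_of_real]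
      with t hJ hd ht
    rw [uIoc_of_le hα.le] at ht
    have hJt := hJ ht.1
    have hc := hJt.add_pos_of_norm_le (hJM.norm_le_norm_add_smul t) ht.1 (norm_pos_iff.1 (hpos t))
    convert (hJt.hasDerivAt_norm_add_smul hc hd).log (hpos t).ne' using 1
    field_simp [(hpos t).ne']
  have hac : AbsolutelyContinuousOnInterval (fun s => Real.log ‖x + s • y‖) M α :=
    ((lipschitzWith_norm_add_smul x y).log_of_le hM0
      hJM.norm_le_norm_add_smul).lipschitzOnWith.absolutelyContinuousOnInterval
  rw [hac.integral_eq_sub_of_ae_hasDerivAt hderiv, Real.exp_sub, Real.exp_log (hpos α),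
    Real.exp_log hM0]
  field_simp

theorem norm_formula_right_of_M
    {E : Type*} [NormedAddCommGroup E] [NormedSpace ℝ E] [CompleteSpace E]
    (x y : E) (hxy : LinearIndependent ℝ ![x, y]) (m M : ℝ) (hmM : m ≤ M)
    (hIcc : {α : ℝ | JamesOrth (x + α • y) y} = Set.Icc m M)
    (f : ℝ → ℝ)
    (hf : ∀ᵐ t ∂(volume : Measure ℝ), M < t → JamesOrth (x + t • y) (x - f t • y)) :
    ∀ α : ℝ, M < α →
      ‖x + α • y‖ = ‖x + M • y‖ * Real.exp (∫ t in M..α, (t + f t)⁻¹) :=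
  norm_formula_right_of_M_general x y hxy m M hmM hIcc f hf
end

section
/- Let E be a real Banach space and T : E → E a linear operator preserving James orthogonality (x ⊥ y implies Tx ⊥ Ty). Let x, y ∈ E be such that x, y are linearly independent and Tx, Ty are linearly independent. Then {α ∈ ℝ : x + α y ⊥ y} = {α ∈ ℝ : Tx + α Ty ⊥ Ty}. -/
/-!
The set of `α` with `x + α y ⊥ y` is the set of minimizers of `γ ↦ ‖x + γ y‖`; it is nonempty
and closed, and `T` maps it into the corresponding set for `Tx, Ty`. Conversely, let `α` minimize
on the `T` side but not on the source side, and let `a` be a source minimizer. Some `β` strictly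
between `a` and `α` is not a source minimizer either, so `u = x + β y` is not orthogonal to `y`,
and a norming functional of `u` gives `u ⊥ y + s u` with `s ≠ 0`. Applying `T`,
`Tu ⊥ Ty + s Tu`, which forces `‖Tu + γ Ty‖ ≥ (1 - γ s) ‖Tu‖` whenever `1 - γ s > 0`. One of
`a - β`, `α - β` has the sign opposite to `s`, and both `Tx + a Ty`, `Tx + α Ty` have norm at most
`‖Tu‖`; hence `Tu = 0`, against the independence of `Tx` and `Ty`.
-/

open Filter Topology

theorem IsClosed.exists_notMem_between {S : Set ℝ} (hS : IsClosed S) {a α : ℝ} (hα : α ∉ S)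
    (haα : a ≠ α) : ∃ β ∉ S, (a - β) * (α - β) < 0 := by
  have hcont : Continuous fun t : ℝ => α + t * (a - α) := by fun_prop
  have hnear : ∀ᶠ t in 𝓝[>] (0 : ℝ), α + t * (a - α) ∉ S :=
    nhdsWithin_le_nhds <| hcont.continuousAt.preimage_mem_nhds <|
      hS.isOpen_compl.mem_nhds (by simpa using hα)
  obtain ⟨t, ht, ht0, ht1⟩ := (hnear.and (Ioo_mem_nhdsGT one_pos)).exists
  refine ⟨α + t * (a - α), ht, ?_⟩
  have hpos : 0 < t * (1 - t) * (a - α) ^ 2 :=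
    mul_pos (mul_pos ht0 (sub_pos.2 ht1)) (pow_two_pos_of_ne_zero (sub_ne_zero.2 haα))
  linear_combination hpos

section JamesOrth

variable {E : Type*} [NormedAddCommGroup E] [NormedSpace ℝ E]

theorem jamesOrth_add_smul_iff (x y : E) (α : ℝ) :
    JamesOrth (x + α • y) y ↔ ∀ γ : ℝ, ‖x + α • y‖ ≤ ‖x + γ • y‖ := by
  refine ⟨fun h γ => ?_, fun h β => ?_⟩
  · simpa [add_assoc, ← add_smul] using h (γ - α)
  · simpa [add_assoc, ← add_smul] using h (α + β)

theorem isClosed_setOf_jamesOrth_add_smul (x y : E) :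
    IsClosed {α : ℝ | JamesOrth (x + α • y) y} := by
  simp only [JamesOrth, Set.ofPred_forall]
  exact isClosed_iInter fun _ => isClosed_le (by fun_prop) (by fun_prop)

theorem exists_jamesOrth_add_smul (x : E) {y : E} (hy : y ≠ 0) :
    ∃ α : ℝ, JamesOrth (x + α • y) y := by
  simp only [jamesOrth_add_smul_iff]
  refine (show Continuous fun γ : ℝ => ‖x + γ • y‖ by fun_prop).exists_forall_le ?_
  have hlower : ∀ γ : ℝ, ‖γ‖ * ‖y‖ - ‖x‖ ≤ ‖x + γ • y‖ := fun γ => by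
    have := norm_le_add_norm_add (γ • y) x
    rw [norm_smul, add_comm (γ • y)] at this
    linarith
  refine tendsto_atTop_mono hlower (tendsto_atTop_add_const_right _ _ ?_)
  exact tendsto_norm_cocompact_atTop.atTop_mul_const (norm_pos_iff.2 hy)

theorem jamesOrth_of_map_eq_zero {u z : E} {φ : E →L[ℝ] ℝ} (hφ : ‖φ‖ ≤ 1) (hu : φ u = ‖u‖)
    (hz : φ z = 0) : JamesOrth u z := fun t =>
  calc ‖u‖ = φ (u + t • z) := by simp [hu, hz]
    _ ≤ ‖φ (u + t • z)‖ := Real.le_norm_self _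
    _ ≤ ‖φ‖ * ‖u + t • z‖ := φ.le_opNorm _
    _ ≤ ‖u + t • z‖ := mul_le_of_le_one_left (norm_nonneg _) hφ

theorem exists_jamesOrth_add_smul_self (u y : E) : ∃ s : ℝ, JamesOrth u (y + s • u) := by
  by_cases hu : u = 0
  · exact ⟨0, fun _ => by simp [hu]⟩
  obtain ⟨φ, hφ, hφu⟩ := exists_dual_vector ℝ u (norm_ne_zero_iff.2 hu)
  have hun : ‖u‖ ≠ 0 := norm_ne_zero_iff.2 hu
  refine ⟨-φ y / ‖u‖, jamesOrth_of_map_eq_zero hφ.le hφu ?_⟩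
  simp only [map_add, map_smul, hφu, smul_eq_mul, RCLike.ofReal_real_eq_id, id_eq]
  field_simp
  ring

theorem one_sub_mul_mul_norm_le {v z : E} {s γ : ℝ} (h : JamesOrth v (z + s • v))
    (hγ : 0 < 1 - γ * s) : (1 - γ * s) * ‖v‖ ≤ ‖v + γ • z‖ := by
  have key : v + (γ / (1 - γ * s)) • (z + s • v) = (1 - γ * s)⁻¹ • (v + γ • z) := by
    have hne : 1 - γ * s ≠ 0 := hγ.ne'
    match_scalars
    · field_simp; ring
    · field_simp
  have := h (γ / (1 - γ * s))
  rw [key, norm_smul, Real.norm_of_nonneg (inv_nonneg.2 hγ.le)] at this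
  rwa [← div_eq_inv_mul, le_div_iff₀' hγ] at this

theorem add_smul_eq_zero_of_jamesOrth {x y : E} {s β a b : ℝ} (hs : s ≠ 0)
    (h : JamesOrth (x + β • y) (y + s • (x + β • y))) (hab : (a - β) * (b - β) < 0)
    (ha : ‖x + a • y‖ ≤ ‖x + β • y‖) (hb : ‖x + b • y‖ ≤ ‖x + β • y‖) : x + β • y = 0 := by
  have hline : ∀ c : ℝ, x + β • y + (c - β) • y = x + c • y := fun c => by module
  suffices ∃ c, (c - β) * s < 0 ∧ ‖x + c • y‖ ≤ ‖x + β • y‖ by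
    obtain ⟨c, hc, hcβ⟩ := this
    have := one_sub_mul_mul_norm_le (γ := c - β) h (by linarith)
    rw [hline] at this
    rw [← norm_le_zero_iff]
    nlinarith [norm_nonneg (x + β • y)]
  by_cases has : (a - β) * s < 0
  · exact ⟨a, has, ha⟩
  · refine ⟨b, ?_, hb⟩
    nlinarith [mul_neg_of_neg_of_pos hab (pow_two_pos_of_ne_zero hs)]

theorem jamesOrth_add_smul_of_map (T : E →ₗ[ℝ] E)
    (hT : ∀ x y : E, JamesOrth x y → JamesOrth (T x) (T y)) {x y : E} (hy : y ≠ 0)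
    (hTxy : ∀ β : ℝ, T x + β • T y ≠ 0) {α : ℝ} (hα : JamesOrth (T x + α • T y) (T y)) :
    JamesOrth (x + α • y) y := by
  have hT' : ∀ c : ℝ, JamesOrth (x + c • y) y → JamesOrth (T x + c • T y) (T y) := fun c hc => by
    simpa using hT _ _ hc
  by_contra hα'
  obtain ⟨a, ha⟩ := exists_jamesOrth_add_smul x hy
  obtain ⟨β, hβ, haβα⟩ := (isClosed_setOf_jamesOrth_add_smul x y).exists_notMem_between hα'
    (a := a) (by rintro rfl; exact hα' ha)
  obtain ⟨s, hs⟩ := exists_jamesOrth_add_smul_self (x + β • y) y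
  have hs0 : s ≠ 0 := by
    rintro rfl
    exact hβ (by simpa using hs)
  have hTs : JamesOrth (T x + β • T y) (T y + s • (T x + β • T y)) := by simpa using hT _ _ hs
  exact hTxy β <| add_smul_eq_zero_of_jamesOrth hs0 hTs haβα
    ((jamesOrth_add_smul_iff _ _ _).1 (hT' a ha) β) ((jamesOrth_add_smul_iff _ _ _).1 hα β)

end JamesOrth

theorem orthogonality_intervals_coincide_general
    {E : Type*} [NormedAddCommGroup E] [NormedSpace ℝ E]
    (T : E →ₗ[ℝ] E)
    (hT : ∀ x y : E, JamesOrth x y → JamesOrth (T x) (T y))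
    (x y : E)
    (hTxy : LinearIndependent ℝ ![T x, T y]) :
    {α : ℝ | JamesOrth (x + α • y) y} = {α : ℝ | JamesOrth (T x + α • T y) (T y)} := by
  have hy : y ≠ 0 := by
    rintro rfl
    simpa using LinearIndependent.pair_iff.1 hTxy 0 1
  have hTxy' : ∀ β : ℝ, T x + β • T y ≠ 0 := fun β h => by
    simpa using LinearIndependent.pair_iff.1 hTxy 1 β (by simpa using h)
  ext α
  refine ⟨fun h => ?_, jamesOrth_add_smul_of_map T hT hy hTxy'⟩
  simpa using hT _ _ h

theorem orthogonality_intervals_coincide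
    {E : Type*} [NormedAddCommGroup E] [NormedSpace ℝ E] [CompleteSpace E]
    (T : E →ₗ[ℝ] E)
    (hT : ∀ x y : E, JamesOrth x y → JamesOrth (T x) (T y))
    (x y : E) (hxy : LinearIndependent ℝ ![x, y])
    (hTxy : LinearIndependent ℝ ![T x, T y]) :
    {α : ℝ | JamesOrth (x + α • y) y} = {α : ℝ | JamesOrth (T x + α • T y) (T y)} :=
  orthogonality_intervals_coincide_general T hT x y hTxy
end

section
/- Let E be a real Banach space and T : E → E a linear operator preserving James orthogonality (x ⊥ y implies Tx ⊥ Ty). Let x, y ∈ E be such that x, y are linearly independent and Tx, Ty are linearly independent. Then there exists a constant c > 0 such that ‖Tx + α Ty‖ = c · ‖x + α y‖ for every α ∈ ℝ. -/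
/-!
Put `f t = ‖x + t • y‖` and `g t = ‖T x + t • T y‖`: both are positive and `f` is convex.
A supporting line of `f` at `a` with slope `p` amounts to the James orthogonality
`x + a • y ⊥ ‖x + a • y‖ • y - p • (x + a • y)`, so `T` turns it into a supporting line of `g`
at `a` with slope `p * g a / f a`. Comparing supporting lines at two points `s, t` of a compact
interval gives `|g t / f t - g s / f s| ≤ C * (p t - p s) * (t - s)`, and summing this over a fine
partition of `[a, b]` shows that `g / f` is constant.
-/

open Set Filter Topology

def HasSubgradientAt (f : ℝ → ℝ) (p a : ℝ) : Prop :=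
  ∀ s, f a + p * (s - a) ≤ f s

theorem ConvexOn.hasSubgradientAt_rightDeriv {f : ℝ → ℝ} (hf : ConvexOn ℝ univ f) (a : ℝ) :
    HasSubgradientAt f (derivWithin f (Ioi a) a) a := by
  have ha : a ∈ interior univ := by simp
  intro s
  rcases lt_trichotomy s a with hs | rfl | hs
  · have h := (hf.slope_le_leftDeriv_of_mem_interior (mem_univ s) ha hs).trans
      (hf.leftDeriv_le_rightDeriv_of_mem_interior ha)
    rw [slope_def_field, div_le_iff₀ (sub_pos.2 hs)] at h
    linarith
  · simp
  · have h := hf.rightDeriv_le_slope_of_mem_interior ha (mem_univ s) hs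
    rw [slope_def_field, le_div_iff₀ (sub_pos.2 hs)] at h
    linarith

theorem div_sub_div_le_of_hasSubgradientAt {f g p : ℝ → ℝ} {s t : ℝ} (hfs : 0 < f s)
    (hft : 0 < f t) (hgs : 0 ≤ g s) (hf : HasSubgradientAt f (p t) t)
    (hg : HasSubgradientAt g (p s * g s / f s) s) :
    g s / f s - g t / f t ≤ g s / f s / f t * ((p t - p s) * (t - s)) := by
  set r := g s / f s with hr
  have hgs' : g s = r * f s := by rw [hr, div_mul_cancel₀ _ hfs.ne']
  have hr0 : 0 ≤ r := div_nonneg hgs hfs.le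
  have hgt : r * f t - r * ((p t - p s) * (t - s)) ≤ g t := by
    have h1 := mul_le_mul_of_nonneg_left (hf s) hr0
    have h2 := hg t
    rw [mul_div_assoc, ← hr] at h2
    nlinarith
  rw [div_mul_eq_mul_div, sub_le_iff_le_add, ← add_div, le_div_iff₀ hft]
  linarith

theorem eq_of_abs_sub_le_mul_sub {h P : ℝ → ℝ} {a b : ℝ} (hab : a ≤ b)
    (hP : ∀ s ∈ Icc a b, ∀ t ∈ Icc a b, s ≤ t → |h t - h s| ≤ (P t - P s) * (t - s)) :
    h a = h b := by
  have hbound : ∀ n : ℕ, 0 < n → |h b - h a| ≤ (P b - P a) * (b - a) / n := by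
    intro n hn
    set δ := (b - a) / n with hδ
    have hδ0 : 0 ≤ δ := div_nonneg (sub_nonneg.2 hab) n.cast_nonneg
    set φ : ℕ → ℝ := fun i => a + i * δ with hφ
    have hφ0 : φ 0 = a := by simp [hφ]
    have hφn : φ n = b := by simp only [hφ, hδ]; field_simp; ring
    have hφ_succ : ∀ i, φ (i + 1) = φ i + δ := fun i => by simp only [hφ]; push_cast; ring
    have hmem : ∀ i ≤ n, φ i ∈ Icc a b := fun i hi => by
      refine ⟨le_add_of_nonneg_right (by positivity), ?_⟩
      calc φ i ≤ φ n := by simp only [hφ]; gcongr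
        _ = b := hφn
    calc |h b - h a| = |∑ i ∈ Finset.range n, (h (φ (i + 1)) - h (φ i))| := by
          rw [Finset.sum_range_sub (fun i => h (φ i)), hφ0, hφn]
      _ ≤ ∑ i ∈ Finset.range n, |h (φ (i + 1)) - h (φ i)| := Finset.abs_sum_le_sum_abs _ _
      _ ≤ ∑ i ∈ Finset.range n, (P (φ (i + 1)) - P (φ i)) * δ := by
          refine Finset.sum_le_sum fun i hi => ?_
          have hi : i < n := Finset.mem_range.1 hi
          have := hP _ (hmem i hi.le) _ (hmem (i + 1) hi) (by rw [hφ_succ]; linarith)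
          rw [hφ_succ, add_sub_cancel_left] at this
          rwa [hφ_succ]
      _ = (P b - P a) * (b - a) / n := by
          rw [← Finset.sum_mul, Finset.sum_range_sub (fun i => P (φ i)), hφ0, hφn, hδ,
            mul_div_assoc]
  have hlim := tendsto_const_div_atTop_nhds_zero_nat ((P b - P a) * (b - a))
  have h0 : |h b - h a| ≤ 0 :=
    ge_of_tendsto hlim (eventually_atTop.2 ⟨1, fun n hn => hbound n hn⟩)
  linarith [abs_nonpos_iff.1 h0]

theorem div_eq_div_of_hasSubgradientAt {f g p : ℝ → ℝ} (hfc : Continuous f) (hgc : Continuous g)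
    (hf0 : ∀ t, 0 < f t) (hg0 : ∀ t, 0 ≤ g t) (hf : ∀ t, HasSubgradientAt f (p t) t)
    (hg : ∀ t, HasSubgradientAt g (p t * g t / f t) t) (a b : ℝ) : g a / f a = g b / f b := by
  wlog hab : a ≤ b generalizing a b
  · exact (this b a (le_of_not_ge hab)).symm
  have hcont : Continuous fun z : ℝ × ℝ => g z.1 / f z.1 / f z.2 :=
    ((hgc.comp continuous_fst).div (hfc.comp continuous_fst) fun z => (hf0 _).ne').div
      (hfc.comp continuous_snd) fun z => (hf0 _).ne'
  obtain ⟨C, hC⟩ := (isCompact_Icc.prod isCompact_Icc).exists_bound_of_continuousOn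
    (s := Icc a b ×ˢ Icc a b) hcont.continuousOn
  have hstep : ∀ s ∈ Icc a b, ∀ t ∈ Icc a b,
      g s / f s - g t / f t ≤ C * ((p t - p s) * (t - s)) := by
    intro s hs t ht
    have hD : 0 ≤ (p t - p s) * (t - s) := by nlinarith [hf s t, hf t s]
    calc g s / f s - g t / f t ≤ g s / f s / f t * ((p t - p s) * (t - s)) :=
          div_sub_div_le_of_hasSubgradientAt (hf0 s) (hf0 t) (hg0 s) (hf t) (hg s)
      _ ≤ C * ((p t - p s) * (t - s)) := by
          gcongr
          exact (le_abs_self _).trans (hC (s, t) ⟨hs, ht⟩)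
  refine eq_of_abs_sub_le_mul_sub (h := fun t => g t / f t) (P := fun t => C * p t) hab
    fun s hs t ht _ => abs_sub_le_iff.2 ⟨?_, ?_⟩
  · linarith [hstep t ht s hs]
  · linarith [hstep s hs t ht]

section Norm

variable {E : Type*} [NormedAddCommGroup E] [NormedSpace ℝ E]

theorem LinearIndependent.add_smul_ne_zero_s16 {x y : E} (h : LinearIndependent ℝ ![x, y]) (t : ℝ) :
    x + t • y ≠ 0 := fun h0 => by
  simpa using (LinearIndependent.pair_iff.1 h 1 t (by simpa using h0)).1

theorem JamesOrth.abs_mul_norm_le {u w : E} (h : JamesOrth u w) (l m : ℝ) :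
    |l| * ‖u‖ ≤ ‖l • u + m • w‖ := by
  rcases eq_or_ne l 0 with rfl | hl
  · simp
  · calc |l| * ‖u‖ ≤ |l| * ‖u + (m / l) • w‖ := by gcongr; exact h _
      _ = ‖l • u + m • w‖ := by
        rw [← Real.norm_eq_abs, ← norm_smul, smul_add, smul_smul, mul_div_cancel₀ _ hl]

theorem jamesOrth_of_isLocalMin {u w : E} (h : IsLocalMin (fun t : ℝ => ‖u + t • w‖) 0) :
    JamesOrth u w := by
  simpa [JamesOrth] using IsMinOn.of_isLocalMin_of_convex_univ h (convexOn_norm_add_smul u w)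

end Norm

section Plane

variable {E F : Type*} [NormedAddCommGroup E] [NormedSpace ℝ E] [NormedAddCommGroup F]
  [NormedSpace ℝ F] {x y : E} {a p : ℝ}

theorem jamesOrth_of_hasSubgradientAt (h : HasSubgradientAt (fun s => ‖x + s • y‖) p a) :
    JamesOrth (x + a • y) (‖x + a • y‖ • y - p • (x + a • y)) := by
  apply jamesOrth_of_isLocalMin
  set u := x + a • y with hu
  have hpos : ∀ᶠ t in 𝓝 (0 : ℝ), 0 < 1 - t * p :=
    continuousAt_const.eventually_lt (by fun_prop) (by simp)
  filter_upwards [hpos] with t ht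
  -- near `t = 0` the left side is a positive multiple of a point on the line `x + ℝ • y`
  have hvec :
      u + t • (‖u‖ • y - p • u) = (1 - t * p) • (x + (a + t * ‖u‖ / (1 - t * p)) • y) := by
    rw [hu]; match_scalars <;> field_simp <;> ring
  calc ‖u + (0 : ℝ) • (‖u‖ • y - p • u)‖
      = (1 - t * p) * (‖u‖ + p * (a + t * ‖u‖ / (1 - t * p) - a)) := by
        rw [zero_smul, add_zero]; field_simp; ring
    _ ≤ (1 - t * p) * ‖x + (a + t * ‖u‖ / (1 - t * p)) • y‖ := by gcongr; exact h _
    _ = ‖u + t • (‖u‖ • y - p • u)‖ := by rw [hvec, norm_smul, Real.norm_of_nonneg ht.le]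

theorem hasSubgradientAt_of_jamesOrth {c : ℝ}
    (h : JamesOrth (x + a • y) (c • y - p • (x + a • y))) (hc : 0 < c) :
    HasSubgradientAt (fun s => ‖x + s • y‖) (p * ‖x + a • y‖ / c) a := by
  intro s
  have hvec : x + s • y
      = (1 + p * (s - a) / c) • (x + a • y) + ((s - a) / c) • (c • y - p • (x + a • y)) := by
    match_scalars <;> field_simp <;> ring
  calc ‖x + a • y‖ + p * ‖x + a • y‖ / c * (s - a) = (1 + p * (s - a) / c) * ‖x + a • y‖ := by
        ring
    _ ≤ |1 + p * (s - a) / c| * ‖x + a • y‖ := by gcongr; exact le_abs_self _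
    _ ≤ ‖x + s • y‖ := hvec ▸ h.abs_mul_norm_le _ _

theorem hasSubgradientAt_norm_map (T : E →ₗ[ℝ] F)
    (hT : ∀ u v : E, JamesOrth u v → JamesOrth (T u) (T v))
    (h : HasSubgradientAt (fun s => ‖x + s • y‖) p a) (ha : 0 < ‖x + a • y‖) :
    HasSubgradientAt (fun s => ‖T x + s • T y‖) (p * ‖T x + a • T y‖ / ‖x + a • y‖) a := by
  have hT' := hT _ _ (jamesOrth_of_hasSubgradientAt h)
  simp only [map_sub, map_add, map_smul] at hT'
  exact hasSubgradientAt_of_jamesOrth hT' ha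

end Plane

theorem norm_proportional_on_plane_general
    {E : Type*} [NormedAddCommGroup E] [NormedSpace ℝ E]
    (T : E →ₗ[ℝ] E)
    (hT : ∀ x y : E, JamesOrth x y → JamesOrth (T x) (T y))
    (x y : E) (hxy : LinearIndependent ℝ ![x, y])
    (hTxy : LinearIndependent ℝ ![T x, T y]) :
    ∃ c : ℝ, 0 < c ∧ ∀ α : ℝ, ‖T x + α • T y‖ = c * ‖x + α • y‖ := by
  set f : ℝ → ℝ := fun t => ‖x + t • y‖
  set g : ℝ → ℝ := fun t => ‖T x + t • T y‖
  have hf0 : ∀ t, 0 < f t := fun t => norm_pos_iff.2 (hxy.add_smul_ne_zero_s16 t)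
  have hg0 : ∀ t, 0 < g t := fun t => norm_pos_iff.2 (hTxy.add_smul_ne_zero_s16 t)
  have hf := (convexOn_norm_add_smul x y).hasSubgradientAt_rightDeriv
  have hg (t : ℝ) : HasSubgradientAt g (derivWithin f (Ioi t) t * g t / f t) t :=
    hasSubgradientAt_norm_map T hT (hf t) (hf0 t)
  have hratio := div_eq_div_of_hasSubgradientAt (by fun_prop) (by fun_prop) hf0
    (fun t => (hg0 t).le) hf hg
  refine ⟨g 0 / f 0, div_pos (hg0 0) (hf0 0), fun α => ?_⟩
  rw [← hratio α, div_mul_cancel₀ _ (hf0 α).ne']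

theorem norm_proportional_on_plane
    {E : Type*} [NormedAddCommGroup E] [NormedSpace ℝ E] [CompleteSpace E]
    (T : E →ₗ[ℝ] E)
    (hT : ∀ x y : E, JamesOrth x y → JamesOrth (T x) (T y))
    (x y : E) (hxy : LinearIndependent ℝ ![x, y])
    (hTxy : LinearIndependent ℝ ![T x, T y]) :
    ∃ c : ℝ, 0 < c ∧ ∀ α : ℝ, ‖T x + α • T y‖ = c * ‖x + α • y‖ :=
  norm_proportional_on_plane_general T hT x y hxy hTxy
end

section
/- Let E be a real Banach space and T : E → E a linear operator preserving James orthogonality (x ⊥ y implies Tx ⊥ Ty). Then for all nonzero x, y ∈ E, ‖Tx‖ · ‖y‖ = ‖Ty‖ · ‖x‖. -/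
/-!
Fix independent `x, y` and put `f t = ‖x + t • y‖`, `g t = ‖T (x + t • y)‖`. The right
derivative `β` of the convex function `f` at `t` is a subgradient there, which makes `x + t • y`
James-orthogonal to `β • (x + t • y) - f t • y`. Transporting this orthogonality by `T` gives
`g t * (f t + s * β) ≤ f t * g (t + s)` for all `s`, so the lower right Dini derivative of `g / f`
is nonnegative and `g / f` is nondecreasing. Replacing `y` by `-y` shows that it is also
nonincreasing, hence constant; comparing `t = 0` with `t = 1`, once for `(x, y)` and once for
`(y, x)`, gives the claim.
-/

open Set Filter Topology

section JamesOrth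

variable {E : Type*} [NormedAddCommGroup E] [NormedSpace ℝ E]

lemma mul_norm_add_mul_le_norm_smul_add_smul {u y : E} {β : ℝ}
    (hβ : ∀ s : ℝ, ‖u‖ + s * β ≤ ‖u + s • y‖) (a b : ℝ) :
    a * ‖u‖ + b * β ≤ ‖a • u + b • y‖ := by
  have hpos : ∀ c > 0, c * ‖u‖ + b * β ≤ ‖c • u + b • y‖ := by
    intro c hc
    calc c * ‖u‖ + b * β = c * (‖u‖ + b / c * β) := by field_simp
      _ ≤ c * ‖u + (b / c) • y‖ := by gcongr; exact hβ _
      _ = ‖c • (u + (b / c) • y)‖ := by rw [norm_smul, Real.norm_of_nonneg hc.le]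
      _ = ‖c • u + b • y‖ := by rw [smul_add, smul_smul, mul_div_cancel₀ _ hc.ne']
  -- shift `a` to a positive coefficient and pay for it with the triangle inequality
  set K := |a| + 1
  calc a * ‖u‖ + b * β = (a + K) * ‖u‖ + b * β - K * ‖u‖ := by ring
    _ ≤ ‖(a + K) • u + b • y‖ - K * ‖u‖ := by gcongr; exact hpos _ (by linarith [neg_abs_le a])
    _ = ‖(a • u + b • y) + K • u‖ - ‖K • u‖ := by
      rw [norm_smul, Real.norm_of_nonneg (by positivity), add_smul, add_right_comm]
    _ ≤ ‖a • u + b • y‖ := by linarith [norm_add_le (a • u + b • y) (K • u)]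

lemma jamesOrth_smul_sub_smul {u y : E} {β : ℝ}
    (hβ : ∀ s : ℝ, ‖u‖ + s * β ≤ ‖u + s • y‖) : JamesOrth u (β • u - ‖u‖ • y) := by
  intro α
  calc ‖u‖ = (1 + α * β) * ‖u‖ + -(α * ‖u‖) * β := by ring
    _ ≤ ‖(1 + α * β) • u + (-(α * ‖u‖)) • y‖ := mul_norm_add_mul_le_norm_smul_add_smul hβ _ _
    _ = ‖u + α • (β • u - ‖u‖ • y)‖ := by congr 1; module

lemma JamesOrth.norm_mul_le_mul_norm_add_smul {p q : E} {β r : ℝ}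
    (h : JamesOrth p (β • p - r • q)) (hr : 0 ≤ r) (s : ℝ) :
    ‖p‖ * (r + s * β) ≤ r * ‖p + s • q‖ := by
  rcases le_or_gt (r + s * β) 0 with hc | hc
  · exact (mul_nonpos_of_nonneg_of_nonpos (norm_nonneg _) hc).trans (by positivity)
  · have key := h (-s / (r + s * β))
    have hvec : p + (-s / (r + s * β)) • (β • p - r • q) = (r / (r + s * β)) • (p + s • q) := by
      match_scalars <;> field_simp; ring
    rwa [hvec, norm_smul, Real.norm_of_nonneg (by positivity), div_mul_eq_mul_div,
      le_div_iff₀ hc] at key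

lemma norm_map_mul_le_mul_norm_map_add_smul {F : Type*} [NormedAddCommGroup F] [NormedSpace ℝ F]
    {T : E →ₗ[ℝ] F} (hT : ∀ x y : E, JamesOrth x y → JamesOrth (T x) (T y)) {u y : E} {β : ℝ}
    (hβ : ∀ s : ℝ, ‖u‖ + s * β ≤ ‖u + s • y‖) (s : ℝ) :
    ‖T u‖ * (‖u‖ + s * β) ≤ ‖u‖ * ‖T (u + s • y)‖ := by
  have h := hT _ _ (jamesOrth_smul_sub_smul hβ)
  rw [map_sub, map_smul, map_smul] at h
  simpa only [map_add, map_smul] using h.norm_mul_le_mul_norm_add_smul (norm_nonneg u) s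

end JamesOrth

lemma ConvexOn.add_mul_rightDeriv_le {f : ℝ → ℝ} (hf : ConvexOn ℝ univ f) (t s : ℝ) :
    f t + s * derivWithin f (Ioi t) t ≤ f (t + s) := by
  have ht : t ∈ interior univ := by simp
  rcases lt_trichotomy s 0 with hs | rfl | hs
  · have hleft := hf.slope_le_leftDeriv_of_mem_interior (mem_univ (t + s)) ht (by linarith)
    have hslope := hleft.trans (hf.leftDeriv_le_rightDeriv_of_mem_interior ht)
    rw [slope_def_field, show t - (t + s) = -s by ring, div_le_iff₀ (by linarith)] at hslope
    linarith
  · simp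
  · have hslope := hf.rightDeriv_le_slope_of_mem_interior ht (mem_univ (t + s)) (by linarith)
    rw [slope_def_field, le_div_iff₀ (by linarith)] at hslope
    linarith

lemma monotone_of_frequently_lt_slope {g : ℝ → ℝ} (hg : Continuous g)
    (h : ∀ t, ∀ r < 0, ∃ᶠ z in 𝓝[>] t, r < slope g t z) : Monotone g := by
  intro a b hab
  have hb := image_le_of_liminf_slope_right_le_deriv_boundary (f := fun t => -g t)
    (B := fun _ => -g a) (B' := fun _ => 0) hg.neg.continuousOn le_rfl continuousOn_const
    (fun _ _ => hasDerivWithinAt_const _ _ _)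
    (fun t _ r hr => by simpa [slope_neg, neg_lt] using h t (-r) (by linarith)) ⟨hab, le_rfl⟩
  linarith

lemma monotone_div_of_mul_add_mul_rightDeriv_le {f g : ℝ → ℝ} (hf : ConvexOn ℝ univ f)
    (hfc : Continuous f) (hgc : Continuous g) (hf₀ : ∀ t, 0 < f t)
    (hfg : ∀ t s, g t * (f t + s * derivWithin f (Ioi t) t) ≤ f t * g (t + s)) :
    Monotone fun t => g t / f t := by
  refine monotone_of_frequently_lt_slope (hgc.div hfc fun t => (hf₀ t).ne') fun t r hr => ?_
  set β := derivWithin f (Ioi t) t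
  set φ : ℝ → ℝ := fun z => -(g t / f t) * (slope f t z - β) / f z
  have hslope : Tendsto (slope f t) (𝓝[>] t) (𝓝 β) := by
    simpa using hasDerivWithinAt_iff_tendsto_slope.mp
      (hf.hasDerivWithinAt_rightDeriv_of_mem_interior (by simp : t ∈ interior univ))
  have hφ : Tendsto φ (𝓝[>] t) (𝓝 0) := by
    have := ((hslope.sub_const β).const_mul (-(g t / f t))).div
      (hfc.continuousWithinAt (s := Ioi t) (x := t)).tendsto (hf₀ t).ne'
    rwa [sub_self, mul_zero, zero_div] at this
  have hle : ∀ᶠ z in 𝓝[>] t, φ z ≤ slope (fun t => g t / f t) t z := by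
    filter_upwards [self_mem_nhdsWithin] with z (hz : t < z)
    have key := hfg t (z - t)
    rw [add_sub_cancel] at key
    have hzt : 0 < z - t := sub_pos.mpr hz
    have hg : g t / f t * (f t + (z - t) * β) ≤ g z := by
      rw [div_mul_eq_mul_div, div_le_iff₀ (hf₀ t)]
      linarith
    simp only [φ, slope_def_field]
    rw [div_le_div_iff₀ (hf₀ z) hzt]
    have e1 : -(g t / f t) * ((f z - f t) / (z - t) - β) * (z - t)
        = g t / f t * (f t + (z - t) * β) - g t / f t * f z := by
      field_simp
      ring
    have e2 : (g z / f z - g t / f t) * f z = g z - g t / f t * f z := by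
      field_simp [(hf₀ z).ne']
    linarith
  exact ((hle.and (hφ.eventually_const_lt hr)).mono fun z hz => hz.2.trans_le hz.1).frequently

section Preserver

variable {E F : Type*} [NormedAddCommGroup E] [NormedSpace ℝ E] [NormedAddCommGroup F]
  [NormedSpace ℝ F] {T : E →ₗ[ℝ] F}

lemma convexOn_univ_norm_add_smul (x y : E) : ConvexOn ℝ univ fun t : ℝ => ‖x + t • y‖ := by
  simpa [Function.comp_def, AffineMap.lineMap_apply, add_comm] using
    convexOn_univ_norm.comp_affineMap (AffineMap.lineMap (k := ℝ) x (x + y))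

lemma monotone_norm_map_add_smul_div_norm (hT : ∀ x y : E, JamesOrth x y → JamesOrth (T x) (T y))
    {x y : E} (hxy : LinearIndependent ℝ ![x, y]) :
    Monotone fun t : ℝ => ‖T (x + t • y)‖ / ‖x + t • y‖ := by
  have hline : ∀ t s : ℝ, x + t • y + s • y = x + (t + s) • y := fun t s => by module
  have hconv := convexOn_univ_norm_add_smul x y
  refine monotone_div_of_mul_add_mul_rightDeriv_le hconv (by fun_prop) ?_ (fun t => ?_)
    fun t s => ?_
  · simp only [map_add, map_smul]
    fun_prop
  · refine norm_pos_iff.mpr fun h => one_ne_zero (LinearIndependent.pair_iff.mp hxy 1 t ?_).1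
    rwa [one_smul]
  · have hβ : ∀ s : ℝ, ‖x + t • y‖ + s * derivWithin (fun t : ℝ => ‖x + t • y‖) (Ioi t) t
        ≤ ‖x + t • y + s • y‖ := fun s => by
      simpa only [hline] using hconv.add_mul_rightDeriv_le t s
    simpa only [hline] using norm_map_mul_le_mul_norm_map_add_smul hT hβ s

lemma norm_map_add_smul_div_norm_eq (hT : ∀ x y : E, JamesOrth x y → JamesOrth (T x) (T y))
    {x y : E} (hxy : LinearIndependent ℝ ![x, y]) (t : ℝ) :
    ‖T (x + t • y)‖ / ‖x + t • y‖ = ‖T x‖ / ‖x‖ := by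
  have hmono := monotone_norm_map_add_smul_div_norm hT hxy
  have hanti : Antitone fun t : ℝ => ‖T (x + t • y)‖ / ‖x + t • y‖ := fun a b hab => by
    simpa only [smul_neg, neg_smul, neg_neg] using
      monotone_norm_map_add_smul_div_norm hT (LinearIndependent.pair_neg_right_iff.mpr hxy)
        (neg_le_neg hab)
  have h0 : ‖T x‖ / ‖x‖ = ‖T (x + (0 : ℝ) • y)‖ / ‖x + (0 : ℝ) • y‖ := by simp
  rw [h0]
  rcases le_total 0 t with ht | ht
  · exact le_antisymm (hanti ht) (hmono ht)
  · exact le_antisymm (hmono ht) (hanti ht)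

end Preserver

theorem norm_ratio_constant_general
    {E : Type*} [NormedAddCommGroup E] [NormedSpace ℝ E]
    (T : E →ₗ[ℝ] E)
    (hT : ∀ x y : E, JamesOrth x y → JamesOrth (T x) (T y)) :
    ∀ x y : E, x ≠ 0 → y ≠ 0 → ‖T x‖ * ‖y‖ = ‖T y‖ * ‖x‖ := by
  intro x y hx hy
  by_cases hxy : LinearIndependent ℝ ![x, y]
  · have hx' := norm_map_add_smul_div_norm_eq hT hxy 1
    have hy' := norm_map_add_smul_div_norm_eq hT (LinearIndependent.pair_symm_iff.mp hxy) 1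
    rw [one_smul, add_comm] at hy'
    rw [one_smul, hy', div_eq_div_iff (norm_ne_zero_iff.mpr hy) (norm_ne_zero_iff.mpr hx)] at hx'
    exact hx'.symm
  · obtain ⟨a, rfl⟩ : ∃ a : ℝ, a • x = y := by simpa [LinearIndependent.pair_iff' hx] using hxy
    rw [map_smul, norm_smul, norm_smul]
    ring

theorem norm_ratio_constant
    {E : Type*} [NormedAddCommGroup E] [NormedSpace ℝ E] [CompleteSpace E]
    (T : E →ₗ[ℝ] E)
    (hT : ∀ x y : E, JamesOrth x y → JamesOrth (T x) (T y)) :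
    ∀ x y : E, x ≠ 0 → y ≠ 0 → ‖T x‖ * ‖y‖ = ‖T y‖ * ‖x‖ :=
  norm_ratio_constant_general T hT
end
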